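/- arXiv:1605.07421 — 6 statements merged into one kernel-verified Lean document; each statement's English description precedes it below -/
import Mathlib

section
/- Let H be a real Hilbert space, let C ⊆ H be a nonempty closed convex set, and let β ∈ (0, 1). Then the set of fixed points of the modified reflector 2βP_C − I is exactly the singleton {β P_C(0)}; that is, (2βP_C − I)(x) = x if and only if x = β P_C(0). -/
/-!
Fixed points of `2βP_C − I` are the solutions of `x = β P_C x`. The projection `p = P_C y` is
characterised by the variational inequality `⟪y − p, c − p⟫ ≤ 0` for all `c ∈ C`, and since
`β p − p = (1 − β) (0 − p)` with `1 − β > 0`, the point `p ∈ C` satisfies it for `y = β p`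
exactly when it satisfies it for `y = 0`. Hence `P_C (β p) = p ↔ P_C 0 = p`.
-/

open RealInnerProductSpace

section
variable {H : Type*} [NormedAddCommGroup H] [InnerProductSpace ℝ H]

theorem real_inner_sub_le_zero_of_forall_norm_sub_le {K : Set H} (hK : Convex ℝ K) {x p : H}
    (hp : p ∈ K) (hmin : ∀ c ∈ K, ‖x - p‖ ≤ ‖x - c‖) : ∀ c ∈ K, ⟪x - p, c - p⟫ ≤ 0 := by
  have : Nonempty K := ⟨⟨p, hp⟩⟩
  refine (norm_eq_iInf_iff_real_inner_le_zero hK hp).1 (Eq.symm ?_)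
  exact ciInf_eq_of_forall_ge_of_forall_gt_exists_lt (fun c => hmin c c.2) fun _ hw => ⟨⟨p, hp⟩, hw⟩

theorem eq_of_real_inner_sub_le_zero {K : Set H} {x p q : H} (hp : p ∈ K) (hq : q ∈ K)
    (hpv : ∀ c ∈ K, ⟪x - p, c - p⟫ ≤ 0) (hqv : ∀ c ∈ K, ⟪x - q, c - q⟫ ≤ 0) : p = q := by
  have hsum : ⟪p - q, p - q⟫ = ⟪x - q, p - q⟫ + ⟪x - p, q - p⟫ := by
    rw [← neg_sub p q, inner_neg_right, ← sub_eq_add_neg, ← inner_sub_left]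
    congr 1; abel
  have : ⟪p - q, p - q⟫ ≤ 0 := by linarith [hpv q hq, hqv p hp]
  exact sub_eq_zero.1 (real_inner_self_nonpos.1 this)

theorem real_inner_smul_sub_self_nonpos_iff {β : ℝ} (hβ : β < 1) (p v : H) :
    ⟪β • p - p, v⟫ ≤ 0 ↔ ⟪0 - p, v⟫ ≤ 0 := by
  rw [show β • p - p = (1 - β) • (0 - p) by module, real_inner_smul_left]
  simpa using mul_le_mul_iff_right₀ (b := ⟪0 - p, v⟫) (c := 0) (sub_pos.2 hβ)

theorem two_mul_smul_sub_eq_self_iff (β : ℝ) (p x : H) : (2 * β) • p - x = x ↔ x = β • p := by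
  constructor <;> intro h
  · have h2 : (2 : ℝ) • x = (2 : ℝ) • (β • p) := by
      rw [two_smul, ← eq_add_of_sub_eq h, smul_smul]
    exact smul_right_injective H two_ne_zero h2
  · rw [h]; module

theorem proj_eq_iff_real_inner_sub_le_zero {C : Set H} (hCv : Convex ℝ C) {PC : H → H}
    (hPC : ∀ x, PC x ∈ C ∧ ∀ c ∈ C, ‖x - PC x‖ ≤ ‖x - c‖) {y p : H} (hp : p ∈ C) :
    PC y = p ↔ ∀ c ∈ C, ⟪y - p, c - p⟫ ≤ 0 := by
  have hproj := real_inner_sub_le_zero_of_forall_norm_sub_le hCv (hPC y).1 (hPC y).2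
  exact ⟨fun h => h ▸ hproj, fun hpv => eq_of_real_inner_sub_le_zero (hPC y).1 hp hproj hpv⟩

theorem proj_smul_eq_iff_proj_zero_eq {C : Set H} (hCv : Convex ℝ C) {PC : H → H}
    (hPC : ∀ x, PC x ∈ C ∧ ∀ c ∈ C, ‖x - PC x‖ ≤ ‖x - c‖) {β : ℝ} (hβ : β < 1) {p : H}
    (hp : p ∈ C) : PC (β • p) = p ↔ PC 0 = p := by
  simp only [proj_eq_iff_real_inner_sub_le_zero hCv hPC hp,
    real_inner_smul_sub_self_nonpos_iff hβ]

end

theorem stmt_1_general {H : Type*} [NormedAddCommGroup H] [InnerProductSpace ℝ H]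
    (C : Set H) (hCv : Convex ℝ C)
    (PC : H → H) (hPC : ∀ x, PC x ∈ C ∧ ∀ c ∈ C, ‖x - PC x‖ ≤ ‖x - c‖)
    (β : ℝ) (hβ : β ∈ Set.Ioo (0 : ℝ) 1) (x : H) :
    (2 * β) • PC x - x = x ↔ x = β • PC 0 := by
  have hfix : ∀ p ∈ C, PC (β • p) = p ↔ PC 0 = p := fun p hp =>
    proj_smul_eq_iff_proj_zero_eq hCv hPC hβ.2 hp
  rw [two_mul_smul_sub_eq_self_iff]
  constructor
  · intro hx
    have h0 : PC 0 = PC x := (hfix _ (hPC x).1).1 (by rw [← hx])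
    rwa [h0]
  · intro hx
    have h0 : PC x = PC 0 := by rw [hx]; exact (hfix _ (hPC 0).1).2 rfl
    rwa [h0]

/-- For a nonempty closed convex set `C` and `β ∈ (0,1)`, the set of
fixed points of the modified reflector `2βP_C − I` is exactly `{β P_C(0)}`. -/
theorem stmt_1 {H : Type*} [NormedAddCommGroup H] [InnerProductSpace ℝ H] [CompleteSpace H]
    (C : Set H) (hCne : C.Nonempty) (hCc : IsClosed C) (hCv : Convex ℝ C)
    (PC : H → H) (hPC : ∀ x, PC x ∈ C ∧ ∀ c ∈ C, ‖x - PC x‖ ≤ ‖x - c‖)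
    (β : ℝ) (hβ : β ∈ Set.Ioo (0 : ℝ) 1) (x : H) :
    (2 * β) • PC x - x = x ↔ x = β • PC 0 :=
  stmt_1_general C hCv PC hPC β hβ x
end

section
/- Let H be a real Hilbert space, let A, B ⊆ H be nonempty closed convex sets, and let α, β ∈ (0, 1). Then the AAMR operator T_{A,B,α,β} has a fixed point if and only if A ∩ B ≠ ∅ and −P_{A∩B}(0) ∈ N_A(P_{A∩B}(0)) + N_B(P_{A∩B}(0)). -/
open RealInnerProductSpace Pointwise

/-- The normal cone to a convex set `C` at `x` (empty when `x ∉ C`). -/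
def normalCone {H : Type*} [NormedAddCommGroup H] [InnerProductSpace ℝ H]
    (C : Set H) (x : H) : Set H :=
  {u | x ∈ C ∧ ∀ c ∈ C, ⟪u, c - x⟫ ≤ 0}

/-!
A point `x` is fixed by `T_{A,B,α,β}` exactly when `PB y = PA x` for `y = 2β PA x - x`. Writing
`p = PA x`, the characterisation of projections by normal cones turns this into
`x - p ∈ N_A(p)` and `y - p ∈ N_B(p)`, two vectors whose sum is `-(2 - 2β) p`; conversely, if
`-(2 - 2β) p = u + v` with `u ∈ N_A(p)` and `v ∈ N_B(p)`, then `x = p + u` is fixed. Since normal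
cones are cones, the factor `2 - 2β > 0` can be dropped, and `-p ∈ N_A(p) + N_B(p)` forces `p` to
be the minimum-norm point of `A ∩ B`.
-/

section AAMR

variable {E : Type*} [AddCommGroup E] [Module ℝ E]

theorem aamr_eq_self_iff {PA PB : E → E} {α β : ℝ} (hα : α ≠ 0) (hβ : β ≠ 0) (x : E) :
    (1 - α) • x + α • ((2 * β) • PB ((2 * β) • PA x - x) - ((2 * β) • PA x - x)) = x ↔
      PB ((2 * β) • PA x - x) = PA x := by
  rw [← sub_eq_zero, ← sub_eq_zero (a := PB _),
    show ∀ y z : E, (1 - α) • x + α • ((2 * β) • y - ((2 * β) • z - x)) - x =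
      (α * (2 * β)) • (y - z) from fun y z => by module]
  simp [hα, hβ]

end AAMR

namespace normalCone

variable {H : Type*} [NormedAddCommGroup H] [InnerProductSpace ℝ H] {C A B : Set H} {x p c : H}

theorem smul_mem {u : H} {t : ℝ} (ht : 0 ≤ t) (hu : u ∈ normalCone C p) :
    t • u ∈ normalCone C p :=
  ⟨hu.1, fun c hc => by
    rw [real_inner_smul_left]
    exact mul_nonpos_of_nonneg_of_nonpos ht (hu.2 c hc)⟩

theorem smul_mem_add {u : H} {t : ℝ} (ht : 0 ≤ t) (hu : u ∈ normalCone A p + normalCone B p) :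
    t • u ∈ normalCone A p + normalCone B p := by
  obtain ⟨a, ha, b, hb, rfl⟩ := hu
  rw [smul_add]
  exact Set.add_mem_add (smul_mem ht ha) (smul_mem ht hb)

theorem smul_mem_add_iff {u : H} {t : ℝ} (ht : 0 < t) :
    t • u ∈ normalCone A p + normalCone B p ↔ u ∈ normalCone A p + normalCone B p :=
  ⟨fun h => inv_smul_smul₀ ht.ne' u ▸ smul_mem_add (inv_nonneg.2 ht.le) h,
    smul_mem_add ht.le⟩

theorem add_subset_inter : normalCone A p + normalCone B p ⊆ normalCone (A ∩ B) p := by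
  rintro _ ⟨u, hu, v, hv, rfl⟩
  refine ⟨⟨hu.1, hv.1⟩, fun c hc => ?_⟩
  rw [inner_add_left]
  exact add_nonpos (hu.2 c hc.1) (hv.2 c hc.2)

theorem norm_sub_sq_add_le (h : x - p ∈ normalCone C p) (hc : c ∈ C) :
    ‖x - p‖ ^ 2 + ‖c - p‖ ^ 2 ≤ ‖x - c‖ ^ 2 := by
  have hxc : x - c = (x - p) - (c - p) := by abel
  linarith [h.2 c hc, hxc ▸ norm_sub_sq_real (x - p) (c - p)]

theorem norm_sub_le (h : x - p ∈ normalCone C p) (hc : c ∈ C) : ‖x - p‖ ≤ ‖x - c‖ :=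
  (sq_le_sq₀ (norm_nonneg _) (norm_nonneg _)).1 <|
    le_of_add_le_of_nonneg_left (norm_sub_sq_add_le h hc) (sq_nonneg _)

theorem eq_of_norm_sub_le (h : x - p ∈ normalCone C p) (hc : c ∈ C) (hle : ‖x - c‖ ≤ ‖x - p‖) :
    c = p := by
  have hsq := norm_sub_sq_add_le h hc
  have hcp : ‖c - p‖ ^ 2 = 0 := by nlinarith [norm_nonneg (x - c), norm_nonneg (x - p)]
  simpa [sub_eq_zero] using hcp

theorem sub_mem_of_forall_norm_sub_le (hC : Convex ℝ C) (hp : p ∈ C)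
    (h : ∀ c ∈ C, ‖x - p‖ ≤ ‖x - c‖) : x - p ∈ normalCone C p := by
  refine ⟨hp, (norm_eq_iInf_iff_real_inner_le_zero hC hp).1 ?_⟩
  have : Nonempty C := ⟨⟨p, hp⟩⟩
  have hbdd : BddBelow (Set.range fun c : C => ‖x - c‖) := ⟨0, by rintro _ ⟨c, rfl⟩; positivity⟩
  exact le_antisymm (le_ciInf fun c => h c c.2) (ciInf_le hbdd ⟨p, hp⟩)

theorem norm_le_of_neg_mem_add (h : -p ∈ normalCone A p + normalCone B p) {y : H}
    (hy : y ∈ A ∩ B) : ‖p‖ ≤ ‖y‖ := by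
  have h' : 0 - p ∈ normalCone (A ∩ B) p := by
    rw [zero_sub]
    exact add_subset_inter h
  simpa using norm_sub_le h' hy

end normalCone

section Projection

variable {H : Type*} [NormedAddCommGroup H] [InnerProductSpace ℝ H] {C : Set H} {P : H → H}

theorem sub_proj_mem_normalCone (hC : Convex ℝ C)
    (hP : ∀ x, P x ∈ C ∧ ∀ c ∈ C, ‖x - P x‖ ≤ ‖x - c‖) (x : H) :
    x - P x ∈ normalCone C (P x) :=
  normalCone.sub_mem_of_forall_norm_sub_le hC (hP x).1 (hP x).2

theorem proj_eq_of_sub_mem_normalCone (hP : ∀ x, P x ∈ C ∧ ∀ c ∈ C, ‖x - P x‖ ≤ ‖x - c‖)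
    {x p : H} (h : x - p ∈ normalCone C p) : P x = p :=
  normalCone.eq_of_norm_sub_le h (hP x).1 ((hP x).2 p h.1)

theorem exists_aamr_fixed_iff {A B : Set H} (hA : Convex ℝ A) (hB : Convex ℝ B) {PA PB : H → H}
    (hPA : ∀ x, PA x ∈ A ∧ ∀ c ∈ A, ‖x - PA x‖ ≤ ‖x - c‖)
    (hPB : ∀ x, PB x ∈ B ∧ ∀ c ∈ B, ‖x - PB x‖ ≤ ‖x - c‖) (β : ℝ) :
    (∃ x, PB ((2 * β) • PA x - x) = PA x) ↔
      ∃ p ∈ A ∩ B, (2 - 2 * β) • -p ∈ normalCone A p + normalCone B p := by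
  constructor
  · rintro ⟨x, hx⟩
    set y := (2 * β) • PA x - x
    have hu := sub_proj_mem_normalCone hA hPA x
    have hv := sub_proj_mem_normalCone hB hPB y
    rw [hx] at hv
    refine ⟨PA x, ⟨hu.1, hv.1⟩, ?_⟩
    convert Set.add_mem_add hu hv using 1
    module
  · rintro ⟨p, -, u, hu, v, hv, huv⟩
    have hPAx : PA (p + u) = p := proj_eq_of_sub_mem_normalCone hPA (by simpa using hu)
    refine ⟨p + u, ?_⟩
    rw [hPAx]
    refine proj_eq_of_sub_mem_normalCone hPB ?_
    convert hv using 1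
    rw [eq_sub_of_add_eq' huv]
    module

end Projection

/-- `P_{A∩B}(0)` is encoded as the point `p ∈ A ∩ B` of minimum norm. -/
theorem stmt_5_general {H : Type*} [NormedAddCommGroup H] [InnerProductSpace ℝ H]
    (A B : Set H) (hAv : Convex ℝ A) (hBv : Convex ℝ B)
    (PA PB : H → H)
    (hPA : ∀ x, PA x ∈ A ∧ ∀ c ∈ A, ‖x - PA x‖ ≤ ‖x - c‖)
    (hPB : ∀ x, PB x ∈ B ∧ ∀ c ∈ B, ‖x - PB x‖ ≤ ‖x - c‖)
    (α β : ℝ) (hα : α ∈ Set.Ioo (0 : ℝ) 1) (hβ : β ∈ Set.Ioo (0 : ℝ) 1)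
    (T : H → H)
    (hT : ∀ x, T x =
      (1 - α) • x + α • ((2 * β) • PB ((2 * β) • PA x - x) - ((2 * β) • PA x - x))) :
    (∃ x, T x = x) ↔
      ∃ p, (p ∈ A ∩ B ∧ ∀ y ∈ A ∩ B, ‖p‖ ≤ ‖y‖) ∧
        -p ∈ normalCone A p + normalCone B p := by
  have hc : 0 < 2 - 2 * β := by linarith [hβ.2]
  simp only [hT, aamr_eq_self_iff hα.1.ne' hβ.1.ne', exists_aamr_fixed_iff hAv hBv hPA hPB,
    normalCone.smul_mem_add_iff hc]
  exact ⟨fun ⟨p, hp, h⟩ => ⟨p, ⟨hp, fun _ => normalCone.norm_le_of_neg_mem_add h⟩, h⟩,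
    fun ⟨p, ⟨hp, _⟩, h⟩ => ⟨p, hp, h⟩⟩

/-- The AAMR operator `T_{A,B,α,β}` has a fixed point if and only if
`A ∩ B ≠ ∅` and `−P_{A∩B}(0) ∈ N_A(P_{A∩B}(0)) + N_B(P_{A∩B}(0))`; here `P_{A∩B}(0)`
is encoded as the point `p ∈ A ∩ B` of minimum norm. -/
theorem stmt_5 {H : Type*} [NormedAddCommGroup H] [InnerProductSpace ℝ H] [CompleteSpace H]
    (A B : Set H) (hAne : A.Nonempty) (hAc : IsClosed A) (hAv : Convex ℝ A)
    (hBne : B.Nonempty) (hBc : IsClosed B) (hBv : Convex ℝ B)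
    (PA PB : H → H)
    (hPA : ∀ x, PA x ∈ A ∧ ∀ c ∈ A, ‖x - PA x‖ ≤ ‖x - c‖)
    (hPB : ∀ x, PB x ∈ B ∧ ∀ c ∈ B, ‖x - PB x‖ ≤ ‖x - c‖)
    (α β : ℝ) (hα : α ∈ Set.Ioo (0 : ℝ) 1) (hβ : β ∈ Set.Ioo (0 : ℝ) 1)
    (T : H → H)
    (hT : ∀ x, T x =
      (1 - α) • x + α • ((2 * β) • PB ((2 * β) • PA x - x) - ((2 * β) • PA x - x))) :
    (∃ x, T x = x) ↔
      ∃ p, (p ∈ A ∩ B ∧ ∀ y ∈ A ∩ B, ‖p‖ ≤ ‖y‖) ∧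
        -p ∈ normalCone A p + normalCone B p :=
  stmt_5_general A B hAv hBv PA PB hPA hPB α β hα hβ T hT
end

section
/- Let H be a real Hilbert space, let A, B ⊆ H be nonempty closed convex sets, and let α, β ∈ (0, 1]. Then: (i) if P_A(0) ∈ B, then (2β − 1)P_A(0) is a fixed point of the AAMR operator T_{A,B,α,β}; and (ii) if P_B(0) ∈ A, then P_B(0) is a fixed point of T_{A,B,α,β}. -/
/-! Two facts about the metric projection `P` onto a convex set `S` suffice: `P` fixes the
points of `S`, and `P (t • P 0) = P 0` for `t ≤ 1`, because `0 - P 0` lies in the normal cone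
of `S` at `P 0` and hence so does its nonnegative multiple `t • P 0 - P 0`.
In (i) the point `(2β − 1) P_A(0)` projects onto `P_A(0) ∈ B`; in (ii) `P_B(0) ∈ A` is fixed by
`P_A` and `(2β − 1) P_B(0)` projects back onto `P_B(0)`. In both cases the relaxed reflection
through `B` returns the argument of the relaxed reflection through `A`, so `T` fixes it. -/

open RealInnerProductSpace

def IsMetricProjection {H : Type*} [NormedAddCommGroup H] (S : Set H) (P : H → H) : Prop :=
  ∀ x, P x ∈ S ∧ ∀ c ∈ S, ‖x - P x‖ ≤ ‖x - c‖

section NearestPoint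

variable {H : Type*} [NormedAddCommGroup H] {S : Set H}

theorem IsMetricProjection.apply_eq_self_of_mem {P : H → H} (hP : IsMetricProjection S P)
    {x : H} (hx : x ∈ S) : P x = x := by
  have h := (hP x).2 x hx
  rw [sub_self, norm_zero, norm_le_zero_iff, sub_eq_zero] at h
  exact h.symm

variable [InnerProductSpace ℝ H]

theorem real_inner_sub_sub_nonpos_of_forall_norm_sub_le (hS : Convex ℝ S) {x p : H}
    (hp : p ∈ S) (hmin : ∀ c ∈ S, ‖x - p‖ ≤ ‖x - c‖) {c : H} (hc : c ∈ S) :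
    ⟪x - p, c - p⟫ ≤ 0 := by
  have : Nonempty S := ⟨⟨p, hp⟩⟩
  have hbdd : BddBelow (Set.range fun w : S => ‖x - w‖) :=
    ⟨0, Set.forall_mem_range.2 fun _ => norm_nonneg _⟩
  exact (norm_eq_iInf_iff_real_inner_le_zero hS hp).1
    (le_antisymm (le_ciInf fun c => hmin c c.2) (ciInf_le hbdd ⟨p, hp⟩)) c hc

theorem eq_of_forall_norm_sub_le_of_forall_real_inner_nonpos (hS : Convex ℝ S) {x p q : H}
    (hp : p ∈ S) (hmin : ∀ c ∈ S, ‖x - p‖ ≤ ‖x - c‖)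
    (hq : q ∈ S) (hq_normal : ∀ c ∈ S, ⟪x - q, c - q⟫ ≤ 0) : p = q := by
  have hpq := real_inner_sub_sub_nonpos_of_forall_norm_sub_le hS hp hmin hq
  have hqp := hq_normal p hp
  have hsum : ⟪p - q, p - q⟫ = ⟪x - p, q - p⟫ + ⟪x - q, p - q⟫ := by
    simp only [inner_sub_left, inner_sub_right, real_inner_comm]
    ring
  rw [← sub_eq_zero, ← real_inner_self_nonpos]
  linarith

theorem IsMetricProjection.apply_smul_apply_zero {P : H → H} (hS : Convex ℝ S)
    (hP : IsMetricProjection S P) {t : ℝ} (ht : t ≤ 1) : P (t • P 0) = P 0 := by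
  refine eq_of_forall_norm_sub_le_of_forall_real_inner_nonpos hS (hP _).1 (hP _).2 (hP 0).1
    fun c hc => ?_
  have h0 := real_inner_sub_sub_nonpos_of_forall_norm_sub_le hS (hP 0).1 (hP 0).2 hc
  calc ⟪t • P 0 - P 0, c - P 0⟫ = (1 - t) * ⟪0 - P 0, c - P 0⟫ := by
        rw [← real_inner_smul_left]
        congr 1
        module
    _ ≤ 0 := mul_nonpos_of_nonneg_of_nonpos (by linarith) h0

end NearestPoint

theorem stmt_7_general {H : Type*} [NormedAddCommGroup H] [InnerProductSpace ℝ H]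
    (A B : Set H) (hAv : Convex ℝ A)
    (hBv : Convex ℝ B)
    (PA PB : H → H)
    (hPA : ∀ x, PA x ∈ A ∧ ∀ c ∈ A, ‖x - PA x‖ ≤ ‖x - c‖)
    (hPB : ∀ x, PB x ∈ B ∧ ∀ c ∈ B, ‖x - PB x‖ ≤ ‖x - c‖)
    (α β : ℝ) (hβ : β ∈ Set.Ioc (0 : ℝ) 1)
    (T : H → H)
    (hT : ∀ x, T x =
      (1 - α) • x + α • ((2 * β) • PB ((2 * β) • PA x - x) - ((2 * β) • PA x - x))) :
    (PA 0 ∈ B → T ((2 * β - 1) • PA 0) = (2 * β - 1) • PA 0) ∧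
    (PB 0 ∈ A → T (PB 0) = PB 0) := by
  have hβ' : 2 * β - 1 ≤ 1 := by linarith [hβ.2]
  refine ⟨fun hB => ?_, fun hA => ?_⟩
  · have hPA' : PA ((2 * β - 1) • PA 0) = PA 0 :=
      IsMetricProjection.apply_smul_apply_zero hAv hPA hβ'
    have hPB' : PB (PA 0) = PA 0 := IsMetricProjection.apply_eq_self_of_mem hPB hB
    rw [hT, hPA', show (2 * β) • PA 0 - (2 * β - 1) • PA 0 = PA 0 by module, hPB']
    module
  · have hPA' : PA (PB 0) = PB 0 := IsMetricProjection.apply_eq_self_of_mem hPA hA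
    have hPB' : PB ((2 * β - 1) • PB 0) = PB 0 :=
      IsMetricProjection.apply_smul_apply_zero hBv hPB hβ'
    rw [hT, hPA', show (2 * β) • PB 0 - PB 0 = (2 * β - 1) • PB 0 by module, hPB']
    module

/-- For `α, β ∈ (0,1]`: (i) if `P_A(0) ∈ B` then `(2β−1)P_A(0)` is a
fixed point of `T_{A,B,α,β}`; (ii) if `P_B(0) ∈ A` then `P_B(0)` is a fixed point. -/
theorem stmt_7 {H : Type*} [NormedAddCommGroup H] [InnerProductSpace ℝ H] [CompleteSpace H]
    (A B : Set H) (hAne : A.Nonempty) (hAc : IsClosed A) (hAv : Convex ℝ A)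
    (hBne : B.Nonempty) (hBc : IsClosed B) (hBv : Convex ℝ B)
    (PA PB : H → H)
    (hPA : ∀ x, PA x ∈ A ∧ ∀ c ∈ A, ‖x - PA x‖ ≤ ‖x - c‖)
    (hPB : ∀ x, PB x ∈ B ∧ ∀ c ∈ B, ‖x - PB x‖ ≤ ‖x - c‖)
    (α β : ℝ) (hα : α ∈ Set.Ioc (0 : ℝ) 1) (hβ : β ∈ Set.Ioc (0 : ℝ) 1)
    (T : H → H)
    (hT : ∀ x, T x =
      (1 - α) • x + α • ((2 * β) • PB ((2 * β) • PA x - x) - ((2 * β) • PA x - x))) :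
    (PA 0 ∈ B → T ((2 * β - 1) • PA 0) = (2 * β - 1) • PA 0) ∧
    (PB 0 ∈ A → T (PB 0) = PB 0) :=
  stmt_7_general A B hAv hBv PA PB hPA hPB α β hβ T hT
end

section
/- Let H be a real Hilbert space, let A, B ⊆ H be nonempty closed convex sets, and let α, β ∈ (0, 1]. If P_A(0) = P_B(0), then for every λ ∈ [0, 1], the point (1 − 2λ(1 − β))P_A(0) is a fixed point of the AAMR operator T_{A,B,α,β}. -/
open RealInnerProductSpace

/-!
By the variational characterisation of nearest points, if `p` is the nearest point of a convex
set to `x`, it stays the nearest point to every `p + t • (x - p)` with `t ≥ 0`. With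
`x = 0` this gives `P_A(s • p) = p` and `P_B(s • p) = p` for all `s ≤ 1`, where `p = P_A 0 = P_B 0`.
For `s = 1 - 2λ(1 - β)` both `s` and `2β - s` are at most `1`, so
`T(s • p) = (1 - α) • s • p + α • (2β • p - (2β - s) • p) = s • p`.
-/

section NearestPoint

variable {H : Type*} [NormedAddCommGroup H] [InnerProductSpace ℝ H] {C : Set H}

def IsNearestPoint (C : Set H) (x p : H) : Prop :=
  p ∈ C ∧ ∀ c ∈ C, ‖x - p‖ ≤ ‖x - c‖

theorem isNearestPoint_iff_inner_le_zero (hC : Convex ℝ C) {x p : H} (hp : p ∈ C) :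
    IsNearestPoint C x p ↔ ∀ c ∈ C, ⟪x - p, c - p⟫ ≤ 0 := by
  have : Nonempty C := ⟨⟨p, hp⟩⟩
  have hbdd : BddBelow (Set.range fun c : C => ‖x - c‖) :=
    ⟨0, fun _ ⟨_, h⟩ => h ▸ norm_nonneg _⟩
  rw [← norm_eq_iInf_iff_real_inner_le_zero hC hp]
  constructor
  · exact fun h => le_antisymm (le_ciInf fun c => h.2 c c.2) (ciInf_le hbdd ⟨p, hp⟩)
  · exact fun h => ⟨hp, fun c hc => h ▸ ciInf_le hbdd ⟨c, hc⟩⟩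

theorem IsNearestPoint.unique (hC : Convex ℝ C) {x p q : H} (hp : IsNearestPoint C x p)
    (hq : IsNearestPoint C x q) : p = q := by
  have hpq := (isNearestPoint_iff_inner_le_zero hC hp.1).1 hp q hq.1
  have hqp := (isNearestPoint_iff_inner_le_zero hC hq.1).1 hq p hp.1
  have hself : ⟪q - p, q - p⟫ = ⟪x - p, q - p⟫ + ⟪x - q, p - q⟫ := by
    rw [show x - q = (x - p) - (q - p) by abel, show p - q = -(q - p) by abel,
      inner_neg_right, inner_sub_left (x - p) (q - p)]
    ring
  have : ⟪q - p, q - p⟫ = 0 :=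
    le_antisymm (by linarith) real_inner_self_nonneg
  exact (sub_eq_zero.1 (inner_self_eq_zero.1 this)).symm

theorem IsNearestPoint.add_smul_sub (hC : Convex ℝ C) {x p : H} (h : IsNearestPoint C x p)
    {t : ℝ} (ht : 0 ≤ t) : IsNearestPoint C (p + t • (x - p)) p := by
  have hp := h.1
  rw [isNearestPoint_iff_inner_le_zero hC hp] at h ⊢
  intro c hc
  rw [add_sub_cancel_left, real_inner_smul_left]
  exact mul_nonpos_of_nonneg_of_nonpos ht (h c hc)

theorem apply_smul_eq_of_isNearestPoint_zero (hC : Convex ℝ C) {P : H → H}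
    (hP : ∀ x, IsNearestPoint C x (P x)) {p : H} (hp : IsNearestPoint C 0 p) {s : ℝ}
    (hs : s ≤ 1) : P (s • p) = p := by
  have hray := hp.add_smul_sub hC (t := 1 - s) (by linarith)
  rw [show p + (1 - s) • (0 - p) = s • p by module] at hray
  exact (hP _).unique hC hray

end NearestPoint

theorem stmt_8_general {H : Type*} [NormedAddCommGroup H] [InnerProductSpace ℝ H]
    (A B : Set H) (hAv : Convex ℝ A)
    (hBv : Convex ℝ B)
    (PA PB : H → H)
    (hPA : ∀ x, PA x ∈ A ∧ ∀ c ∈ A, ‖x - PA x‖ ≤ ‖x - c‖)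
    (hPB : ∀ x, PB x ∈ B ∧ ∀ c ∈ B, ‖x - PB x‖ ≤ ‖x - c‖)
    (α β : ℝ) (hβ : β ∈ Set.Ioc (0 : ℝ) 1)
    (T : H → H)
    (hT : ∀ x, T x =
      (1 - α) • x + α • ((2 * β) • PB ((2 * β) • PA x - x) - ((2 * β) • PA x - x)))
    (heq : PA 0 = PB 0) :
    ∀ lam ∈ Set.Icc (0 : ℝ) 1,
      T ((1 - 2 * lam * (1 - β)) • PA 0) = (1 - 2 * lam * (1 - β)) • PA 0 := by
  rintro lam ⟨hlam0, hlam1⟩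
  obtain ⟨-, hβ1⟩ := hβ
  set p := PA 0
  set s := 1 - 2 * lam * (1 - β)
  have hpB : IsNearestPoint B 0 p := heq ▸ hPB 0
  have hPAs : PA (s • p) = p :=
    apply_smul_eq_of_isNearestPoint_zero hAv hPA (hPA 0) (by nlinarith)
  have hPBs : PB ((2 * β) • p - s • p) = p := by
    rw [← sub_smul]
    exact apply_smul_eq_of_isNearestPoint_zero hBv hPB hpB (by nlinarith)
  rw [hT, hPAs, hPBs]
  module

/-- For `α, β ∈ (0,1]`, if `P_A(0) = P_B(0)`, then for every `λ ∈ [0,1]`,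
the point `(1 − 2λ(1−β))P_A(0)` is a fixed point of the AAMR operator `T_{A,B,α,β}`. -/
theorem stmt_8 {H : Type*} [NormedAddCommGroup H] [InnerProductSpace ℝ H] [CompleteSpace H]
    (A B : Set H) (hAne : A.Nonempty) (hAc : IsClosed A) (hAv : Convex ℝ A)
    (hBne : B.Nonempty) (hBc : IsClosed B) (hBv : Convex ℝ B)
    (PA PB : H → H)
    (hPA : ∀ x, PA x ∈ A ∧ ∀ c ∈ A, ‖x - PA x‖ ≤ ‖x - c‖)
    (hPB : ∀ x, PB x ∈ B ∧ ∀ c ∈ B, ‖x - PB x‖ ≤ ‖x - c‖)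
    (α β : ℝ) (hα : α ∈ Set.Ioc (0 : ℝ) 1) (hβ : β ∈ Set.Ioc (0 : ℝ) 1)
    (T : H → H)
    (hT : ∀ x, T x =
      (1 - α) • x + α • ((2 * β) • PB ((2 * β) • PA x - x) - ((2 * β) • PA x - x)))
    (heq : PA 0 = PB 0) :
    ∀ lam ∈ Set.Icc (0 : ℝ) 1,
      T ((1 - 2 * lam * (1 - β)) • PA 0) = (1 - 2 * lam * (1 - β)) • PA 0 :=
  stmt_8_general A B hAv hBv PA PB hPA hPB α β hβ T hT heq
end

section
/- Let H be a real Hilbert space, let A, B ⊆ H be nonempty closed convex sets, and let α, β ∈ (0, 1). Then for every q ∈ H, the range of I − T_{A,B,α,β} equals the range of I − T_{A+q, B+(2β−1)q, α, β} translated by the vector 4αβ(β−1)q; that is, ran(I − T_{A,B,α,β}) = ran(I − T_{A+q,B+(2β−1)q,α,β}) + 4αβ(β−1)q. -/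
/-!
The projector onto a translate `C + v` is `x ↦ P_C (x - v) + v`, by uniqueness of nearest points
in convex sets. With the translations `q` and `(2β - 1)q`, the reflected point `2β P_{A+q} x - x`
then lands exactly `(2β - 1)q` away from `2β P_A (x - q) - (x - q)`, and unwinding the AAMR formula
gives `y - T y = (y + q) - T' (y + q) + 4αβ(β - 1) q` for every `y`; since `y ↦ y + q` is
bijective, the two ranges differ by that vector.
-/

open RealInnerProductSpace Pointwise

lemma norm_sub_eq_iInf_of_forall_le {E : Type*} [SeminormedAddGroup E] {C : Set E} {x p : E}
    (hp : p ∈ C) (h : ∀ c ∈ C, ‖x - p‖ ≤ ‖x - c‖) : ‖x - p‖ = ⨅ c : C, ‖x - c‖ :=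
  have : Nonempty C := ⟨⟨p, hp⟩⟩
  le_antisymm (le_ciInf fun c => h c c.2)
    (ciInf_le ⟨0, Set.forall_mem_range.2 fun c : C => norm_nonneg (x - c)⟩ ⟨p, hp⟩)

section NearestPoint

variable {H : Type*} [NormedAddCommGroup H] [InnerProductSpace ℝ H] {C : Set H}

lemma Convex.eq_of_forall_norm_sub_le (hC : Convex ℝ C) {x p₁ p₂ : H} (hp₁ : p₁ ∈ C)
    (hp₂ : p₂ ∈ C) (h₁ : ∀ c ∈ C, ‖x - p₁‖ ≤ ‖x - c‖) (h₂ : ∀ c ∈ C, ‖x - p₂‖ ≤ ‖x - c‖) :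
    p₁ = p₂ := by
  have hi₁ := (norm_eq_iInf_iff_real_inner_le_zero hC hp₁).1
    (norm_sub_eq_iInf_of_forall_le hp₁ h₁) p₂ hp₂
  have hi₂ := (norm_eq_iInf_iff_real_inner_le_zero hC hp₂).1
    (norm_sub_eq_iInf_of_forall_le hp₂ h₂) p₁ hp₁
  -- the two variational inequalities add up to `‖p₂ - p₁‖² ≤ 0`
  have hsum : ⟪x - p₁, p₂ - p₁⟫ + ⟪x - p₂, p₁ - p₂⟫ = ‖p₂ - p₁‖ ^ 2 := by
    rw [← neg_sub p₂ p₁, inner_neg_right, ← sub_eq_add_neg, ← inner_sub_left,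
      sub_sub_sub_cancel_left, real_inner_self_eq_norm_sq]
  have : ‖p₂ - p₁‖ = 0 := by nlinarith [norm_nonneg (p₂ - p₁)]
  exact (sub_eq_zero.1 (norm_eq_zero.1 this)).symm

lemma Convex.eq_add_of_forall_norm_sub_le_add_singleton (hC : Convex ℝ C) {v : H}
    {PC PC' : H → H} (hPC : ∀ x, PC x ∈ C ∧ ∀ c ∈ C, ‖x - PC x‖ ≤ ‖x - c‖)
    (hPC' : ∀ x, PC' x ∈ C + {v} ∧ ∀ c ∈ C + {v}, ‖x - PC' x‖ ≤ ‖x - c‖) (x : H) :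
    PC' x = PC (x - v) + v := by
  refine (hC.add (convex_singleton v)).eq_of_forall_norm_sub_le (hPC' x).1
    (Set.add_mem_add (hPC (x - v)).1 rfl) (hPC' x).2 ?_
  rw [Set.add_singleton]
  rintro _ ⟨c, hc, rfl⟩
  simpa only [sub_add_eq_sub_sub_swap] using (hPC (x - v)).2 c hc

end NearestPoint

lemma Set.range_eq_range_add_singleton {α G : Type*} [Add α] [AddGroup G] {f g : G → α} {q : G}
    {v : α} (h : ∀ x, f x = g (x + q) + v) : Set.range f = Set.range g + {v} := by
  rw [Set.add_singleton, ← (add_right_surjective q).range_comp g, ← Set.range_comp]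
  exact congrArg Set.range (funext h)

section AAMR

variable {H : Type*} [AddCommGroup H] [Module ℝ H]

/-- `aamr PA PB α β = (1 - α) I + α (2β PB - I)(2β PA - I)`. -/
def aamr (PA PB : H → H) (α β : ℝ) (x : H) : H :=
  (1 - α) • x + α • ((2 * β) • PB ((2 * β) • PA x - x) - ((2 * β) • PA x - x))

lemma sub_aamr_eq_of_translate {PA PB PA' PB' : H → H} {α β : ℝ} {q : H}
    (hA : ∀ x, PA' x = PA (x - q) + q)
    (hB : ∀ x, PB' x = PB (x - (2 * β - 1) • q) + (2 * β - 1) • q) (x : H) :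
    x - aamr PA PB α β x =
      (x + q) - aamr PA' PB' α β (x + q) + (4 * α * β * (β - 1)) • q := by
  have hreflect : (2 * β) • PA' (x + q) - (x + q) - (2 * β - 1) • q = (2 * β) • PA x - x := by
    rw [hA, add_sub_cancel_right]
    module
  rw [aamr, aamr, hB, hreflect, hA, add_sub_cancel_right]
  module

end AAMR

theorem stmt_10_general {H : Type*} [NormedAddCommGroup H] [InnerProductSpace ℝ H]
    (A B : Set H) (hAv : Convex ℝ A)
    (hBv : Convex ℝ B)
    (α β : ℝ)
    (q : H)
    (PA PB PA' PB' : H → H)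
    (hPA : ∀ x, PA x ∈ A ∧ ∀ c ∈ A, ‖x - PA x‖ ≤ ‖x - c‖)
    (hPB : ∀ x, PB x ∈ B ∧ ∀ c ∈ B, ‖x - PB x‖ ≤ ‖x - c‖)
    (hPA' : ∀ x, PA' x ∈ A + {q} ∧ ∀ c ∈ A + {q}, ‖x - PA' x‖ ≤ ‖x - c‖)
    (hPB' : ∀ x, PB' x ∈ B + {(2 * β - 1) • q} ∧
      ∀ c ∈ B + {(2 * β - 1) • q}, ‖x - PB' x‖ ≤ ‖x - c‖)
    (T T' : H → H)
    (hT : ∀ x, T x =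
      (1 - α) • x + α • ((2 * β) • PB ((2 * β) • PA x - x) - ((2 * β) • PA x - x)))
    (hT' : ∀ x, T' x =
      (1 - α) • x + α • ((2 * β) • PB' ((2 * β) • PA' x - x) - ((2 * β) • PA' x - x))) :
    Set.range (fun x => x - T x) =
      Set.range (fun x => x - T' x) + {(4 * α * β * (β - 1)) • q} := by
  obtain rfl : T = aamr PA PB α β := funext hT
  obtain rfl : T' = aamr PA' PB' α β := funext hT'
  exact Set.range_eq_range_add_singleton <| sub_aamr_eq_of_translate
    (hAv.eq_add_of_forall_norm_sub_le_add_singleton hPA hPA')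
    (hBv.eq_add_of_forall_norm_sub_le_add_singleton hPB hPB')

/-- For every `q ∈ H`,
`ran(I − T_{A,B,α,β}) = ran(I − T_{A+q, B+(2β−1)q, α, β}) + 4αβ(β−1)q`. -/
theorem stmt_10 {H : Type*} [NormedAddCommGroup H] [InnerProductSpace ℝ H] [CompleteSpace H]
    (A B : Set H) (hAne : A.Nonempty) (hAc : IsClosed A) (hAv : Convex ℝ A)
    (hBne : B.Nonempty) (hBc : IsClosed B) (hBv : Convex ℝ B)
    (α β : ℝ) (hα : α ∈ Set.Ioo (0 : ℝ) 1) (hβ : β ∈ Set.Ioo (0 : ℝ) 1)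
    (q : H)
    (PA PB PA' PB' : H → H)
    (hPA : ∀ x, PA x ∈ A ∧ ∀ c ∈ A, ‖x - PA x‖ ≤ ‖x - c‖)
    (hPB : ∀ x, PB x ∈ B ∧ ∀ c ∈ B, ‖x - PB x‖ ≤ ‖x - c‖)
    (hPA' : ∀ x, PA' x ∈ A + {q} ∧ ∀ c ∈ A + {q}, ‖x - PA' x‖ ≤ ‖x - c‖)
    (hPB' : ∀ x, PB' x ∈ B + {(2 * β - 1) • q} ∧
      ∀ c ∈ B + {(2 * β - 1) • q}, ‖x - PB' x‖ ≤ ‖x - c‖)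
    (T T' : H → H)
    (hT : ∀ x, T x =
      (1 - α) • x + α • ((2 * β) • PB ((2 * β) • PA x - x) - ((2 * β) • PA x - x)))
    (hT' : ∀ x, T' x =
      (1 - α) • x + α • ((2 * β) • PB' ((2 * β) • PA' x - x) - ((2 * β) • PA' x - x))) :
    Set.range (fun x => x - T x) =
      Set.range (fun x => x - T' x) + {(4 * α * β * (β - 1)) • q} :=
  stmt_10_general A B hAv hBv α β q PA PB PA' PB' hPA hPB hPA' hPB' T T' hT hT'
end

section
/- Let H be a real Hilbert space, let A, B ⊆ H be nonempty closed convex sets, let α, β ∈ (0, 1), and let q ∈ H. Suppose that either A ∩ B = ∅, or A ∩ B ≠ ∅ but q − P_{A∩B}(q) ∉ N_A(P_{A∩B}(q)) + N_B(P_{A∩B}(q)). Given any x₀ ∈ H, define x_{n+1} = T_{A−q,B−q,α,β}(x_n) for n ≥ 0. Then ‖x_n‖ → ∞. -/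
open RealInnerProductSpace Pointwise Filter

/-!
A fixed point `c` of the AAMR operator for `A - q`, `B - q` yields `p = P_{A-q}(c) + q ∈ A ∩ B`
with `q - p ∈ N_A(p) + N_B(p)`; such a `p` satisfies the variational inequality of the projection
onto `A ∩ B`, so it is `P_{A∩B}(q)`. Under either hypothesis the operator therefore has no fixed
point. It is averaged, and for an averaged map `T` without fixed points every orbit diverges: the
displacements `x_n - T x_n` converge (Pazy), because their norms decrease to the minimal
displacement and the closure of the range of the monotone operator `I - T` is convex. A nonzero
limit makes the orbit grow linearly; a zero limit makes any bounded subsequence a sequence of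
approximate fixed points, whose weak cluster point is a fixed point.
-/

open Topology

section Normed

variable {E : Type*} [NormedAddCommGroup E]

/-- By [Bauschke–Combettes, Prop. 4.35], `T` is `α`-averaged iff this holds with
`k = (1 - α) / α`. -/
def IsAveraged (k : ℝ) (T : E → E) : Prop :=
  ∀ x y, ‖T x - T y‖ ^ 2 + k * ‖(x - T x) - (y - T y)‖ ^ 2 ≤ ‖x - y‖ ^ 2

lemma IsAveraged.lipschitzWith_one {k : ℝ} {T : E → E} (hT : IsAveraged k T) (hk : 0 ≤ k) :
    LipschitzWith 1 T := by
  refine lipschitzWith_iff_norm_sub_le.2 fun x y => ?_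
  rw [NNReal.coe_one, one_mul]
  refine pow_le_pow_iff_left₀ (norm_nonneg _) (norm_nonneg _) two_ne_zero |>.1 ?_
  nlinarith [hT x y, mul_nonneg hk (sq_nonneg ‖(x - T x) - (y - T y)‖)]

open Finset in
lemma IsAveraged.sum_norm_sq_le {k : ℝ} {T : E → E} (hT : IsAveraged k T) {x y : ℕ → E}
    (hx : ∀ n, x (n + 1) = T (x n)) (hy : ∀ n, y (n + 1) = T (y n)) (N : ℕ) :
    k * ∑ i ∈ range N, ‖(x i - T (x i)) - (y i - T (y i))‖ ^ 2 + ‖x N - y N‖ ^ 2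
      ≤ ‖x 0 - y 0‖ ^ 2 := by
  induction N with
  | zero => simp
  | succ N ih =>
    rw [sum_range_succ, hx, hy]
    linarith [hT (x N) (y N)]

lemma IsAveraged.tendsto_sub_displacement {k : ℝ} {T : E → E} (hT : IsAveraged k T) (hk : 0 < k)
    {x y : ℕ → E} (hx : ∀ n, x (n + 1) = T (x n)) (hy : ∀ n, y (n + 1) = T (y n)) :
    Tendsto (fun n => (x n - T (x n)) - (y n - T (y n))) atTop (𝓝 0) := by
  set e := fun n => ‖(x n - T (x n)) - (y n - T (y n))‖
  have hsum : Summable fun n => e n ^ 2 := by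
    refine summable_of_sum_range_le (c := ‖x 0 - y 0‖ ^ 2 / k) (fun n => by positivity) fun N => ?_
    rw [le_div_iff₀' hk]
    linarith [hT.sum_norm_sq_le hx hy N, sq_nonneg ‖x N - y N‖]
  rw [tendsto_zero_iff_norm_tendsto_zero]
  simpa [e] using hsum.tendsto_atTop_zero.sqrt

lemma LipschitzWith.antitone_norm_displacement {T : E → E} (hT : LipschitzWith 1 T)
    {x : ℕ → E} (hx : ∀ n, x (n + 1) = T (x n)) : Antitone fun n => ‖x n - T (x n)‖ :=
  antitone_nat_of_succ_le fun n => by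
    simpa [hx, norm_sub_rev (T (x n))] using lipschitzWith_iff_norm_sub_le.1 hT (x n) (T (x n))

noncomputable def minDisplacement (T : E → E) : ℝ :=
  ⨅ y, ‖y - T y‖

lemma minDisplacement_le (T : E → E) (y : E) : minDisplacement T ≤ ‖y - T y‖ :=
  ciInf_le ⟨0, by rintro _ ⟨z, rfl⟩; positivity⟩ y

lemma IsAveraged.tendsto_norm_displacement {k : ℝ} {T : E → E} (hT : IsAveraged k T) (hk : 0 < k)
    {x : ℕ → E} (hx : ∀ n, x (n + 1) = T (x n)) :
    Tendsto (fun n => ‖x n - T (x n)‖) atTop (𝓝 (minDisplacement T)) := by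
  have hT₁ := hT.lipschitzWith_one hk.le
  have hanti := hT₁.antitone_norm_displacement hx
  have hbdd : BddBelow (Set.range fun n => ‖x n - T (x n)‖) :=
    ⟨0, by rintro _ ⟨n, rfl⟩; positivity⟩
  have hlim := tendsto_atTop_ciInf hanti hbdd
  suffices ⨅ n, ‖x n - T (x n)‖ ≤ minDisplacement T by
    rwa [le_antisymm this (le_ciInf fun n => minDisplacement_le T (x n))] at hlim
  refine le_ciInf fun y => ?_
  let z : ℕ → E := fun n => T^[n] y
  have hz : ∀ n, z (n + 1) = T (z n) := fun n => Function.iterate_succ_apply' T n y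
  have hsub := (hT.tendsto_sub_displacement hk hx hz).norm.add_const ‖y - T y‖
  rw [norm_zero, zero_add] at hsub
  refine le_of_tendsto_of_tendsto' hlim hsub fun n => ?_
  have hzn : ‖z n - T (z n)‖ ≤ ‖y - T y‖ :=
    hT₁.antitone_norm_displacement hz (Nat.zero_le n)
  linarith [norm_le_norm_sub_add (x n - T (x n)) (z n - T (z n))]

lemma tendsto_norm_atTop_of_tendsto_sub [NormedSpace ℝ E] {x : ℕ → E} {w : E} (hw : w ≠ 0)
    (hx : Tendsto (fun n => x (n + 1) - x n) atTop (𝓝 w)) :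
    Tendsto (fun n => ‖x n‖) atTop atTop := by
  have hces : Tendsto (fun n : ℕ => ‖(n⁻¹ : ℝ) • (x n - x 0)‖) atTop (𝓝 ‖w‖) := by
    simpa only [Finset.sum_range_sub] using hx.cesaro_smul.norm
  have hgrow : Tendsto (fun n : ℕ => (n : ℝ) * ‖(n⁻¹ : ℝ) • (x n - x 0)‖) atTop atTop :=
    tendsto_natCast_atTop_atTop.atTop_mul_pos (norm_pos_iff.2 hw) hces
  refine tendsto_atTop_mono' atTop ?_ (tendsto_atTop_add_const_right atTop (-‖x 0‖) hgrow)
  filter_upwards [eventually_ne_atTop 0] with n hn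
  rw [norm_smul, norm_inv, RCLike.norm_natCast, ← mul_assoc,
    mul_inv_cancel₀ (Nat.cast_ne_zero.2 hn), one_mul]
  linarith [norm_sub_le (x n) (x 0)]

end Normed

lemma Ultrafilter.exists_tendsto_of_eventually_abs_le {ι : Type*} (U : Ultrafilter ι) {f : ι → ℝ}
    {C : ℝ} (hf : ∀ᶠ j in U, |f j| ≤ C) : ∃ a, Tendsto f U (𝓝 a) := by
  obtain ⟨a, -, ha⟩ := (isCompact_Icc (a := -C) (b := C)).ultrafilter_le_nhds (U.map f)
    (le_principal_iff.2 (hf.mono fun _ => abs_le.1))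
  exact ⟨a, ha⟩

section InnerProduct

variable {H : Type*} [NormedAddCommGroup H] [InnerProductSpace ℝ H]

lemma smul_mem_normalCone {C : Set H} {x v : H} (hv : v ∈ normalCone C x) {s : ℝ} (hs : 0 ≤ s) :
    s • v ∈ normalCone C x :=
  ⟨hv.1, fun c hc => by
    rw [real_inner_smul_left]; exact mul_nonpos_of_nonneg_of_nonpos hs (hv.2 c hc)⟩

lemma normalCone_sub_singleton (C : Set H) (q u : H) :
    normalCone (C - {q}) u = normalCone C (u + q) := by
  ext v
  simp only [normalCone, Set.sub_singleton, Set.mem_ofPred_eq, Set.mem_image, sub_eq_iff_eq_add,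
    exists_eq_right]
  refine and_congr_right fun _ => ⟨fun h c hc => ?_, fun h c hc => ?_⟩
  · simpa [sub_add_eq_sub_sub, sub_right_comm] using h (c - q) (by simpa using hc)
  · simpa only [add_sub_add_right_eq_sub] using h (c + q) hc

lemma normalCone_add_subset_normalCone_inter (A B : Set H) (x : H) :
    normalCone A x + normalCone B x ⊆ normalCone (A ∩ B) x := by
  rintro _ ⟨v, hv, w, hw, rfl⟩
  refine ⟨⟨hv.1, hw.1⟩, fun c hc => ?_⟩
  rw [inner_add_left]
  linarith [hv.2 c hc.1, hw.2 c hc.2]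

lemma eq_of_sub_mem_normalCone {C : Set H} {q p p' : H} (hp : q - p ∈ normalCone C p)
    (hp' : q - p' ∈ normalCone C p') : p = p' := by
  have h : ‖p - p'‖ ^ 2 = ⟪q - p, p' - p⟫ + ⟪q - p', p - p'⟫ := by
    rw [← real_inner_self_eq_norm_sq]
    simp only [inner_sub_left, inner_sub_right, real_inner_comm]
    ring
  have : ‖p - p'‖ ^ 2 ≤ 0 := by linarith [hp.2 p' hp'.1, hp'.2 p hp.1]
  exact sub_eq_zero.mp (norm_eq_zero.mp (by nlinarith [norm_nonneg (p - p')]))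

lemma sub_mem_normalCone_of_forall_norm_le {C : Set H} (hC : Convex ℝ C) {q p : H} (hp : p ∈ C)
    (hmin : ∀ y ∈ C, ‖q - p‖ ≤ ‖q - y‖) : q - p ∈ normalCone C p := by
  have : Nonempty C := ⟨⟨p, hp⟩⟩
  refine ⟨hp, (norm_eq_iInf_iff_real_inner_le_zero hC hp).1 (le_antisymm ?_ ?_)⟩
  · exact le_ciInf fun y => hmin y y.2
  · exact ciInf_le ⟨0, by rintro _ ⟨y, rfl⟩; positivity⟩ (⟨p, hp⟩ : C)

def IsNearestPointMap (C : Set H) (P : H → H) : Prop :=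
  ∀ x, P x ∈ C ∧ ∀ c ∈ C, ‖x - P x‖ ≤ ‖x - c‖

def relaxedReflection (β : ℝ) (P : H → H) (x : H) : H :=
  (2 * β) • P x - x

lemma IsNearestPointMap.sub_mem_normalCone {C : Set H} {P : H → H}
    (hP : IsNearestPointMap C P) (hC : Convex ℝ C) (x : H) : x - P x ∈ normalCone C (P x) :=
  sub_mem_normalCone_of_forall_norm_le hC (hP x).1 (hP x).2

lemma IsNearestPointMap.norm_sub_sq_le_inner {C : Set H} {P : H → H}
    (hP : IsNearestPointMap C P) (hC : Convex ℝ C) (x y : H) :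
    ‖P x - P y‖ ^ 2 ≤ ⟪P x - P y, x - y⟫ := by
  have hx := (hP.sub_mem_normalCone hC x).2 (P y) (hP y).1
  have hy := (hP.sub_mem_normalCone hC y).2 (P x) (hP x).1
  have h : ⟪P x - P y, x - y⟫ - ‖P x - P y‖ ^ 2
      = -⟪x - P x, P y - P x⟫ - ⟪y - P y, P x - P y⟫ := by
    rw [← real_inner_self_eq_norm_sq]
    simp only [inner_sub_left, inner_sub_right, real_inner_comm]
    ring
  linarith

lemma IsNearestPointMap.lipschitzWith_relaxedReflection {C : Set H} {P : H → H}
    (hP : IsNearestPointMap C P) (hC : Convex ℝ C) {β : ℝ} (hβ₀ : 0 ≤ β) (hβ₁ : β ≤ 1) :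
    LipschitzWith 1 (relaxedReflection β P) := by
  refine lipschitzWith_iff_norm_sub_le.2 fun x y => ?_
  have h : ‖relaxedReflection β P x - relaxedReflection β P y‖ ^ 2
      = ‖x - y‖ ^ 2 - 4 * β * (⟪P x - P y, x - y⟫ - ‖P x - P y‖ ^ 2)
        - 4 * β * (1 - β) * ‖P x - P y‖ ^ 2 := by
    simp only [relaxedReflection, ← real_inner_self_eq_norm_sq, inner_sub_left, inner_sub_right,
      real_inner_smul_right, real_inner_comm]
    ring
  have hfirm := hP.norm_sub_sq_le_inner hC x y
  rw [NNReal.coe_one, one_mul]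
  refine pow_le_pow_iff_left₀ (norm_nonneg _) (norm_nonneg _) two_ne_zero |>.1 ?_
  rw [h]
  nlinarith [mul_nonneg (mul_nonneg hβ₀ (sub_nonneg.2 hβ₁)) (sq_nonneg ‖P x - P y‖)]

def aamrOperator (PA PB : H → H) (α β : ℝ) (x : H) : H :=
  (1 - α) • x + α • relaxedReflection β PB (relaxedReflection β PA x)

lemma neg_mem_normalCone_add_of_aamrOperator_eq_self {C D : Set H} {PC PD : H → H}
    (hC : Convex ℝ C) (hD : Convex ℝ D) (hPC : IsNearestPointMap C PC)
    (hPD : IsNearestPointMap D PD) {α β : ℝ} (hα : α ≠ 0) (hβ : β ∈ Set.Ioo (0 : ℝ) 1) {c : H}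
    (hc : aamrOperator PC PD α β c = c) :
    -PC c ∈ normalCone C (PC c) + normalCone D (PC c) := by
  unfold aamrOperator at hc
  set y := relaxedReflection β PC c
  unfold relaxedReflection at hc
  have hy : y = (2 * β) • PC c - c := rfl
  have hrefl : (2 * β) • PD y - y = c :=
    smul_right_injective H hα (by linear_combination (norm := module) hc)
  have hPDy : PD y = PC c :=
    smul_right_injective H (by linarith [hβ.1] : 2 * β ≠ 0)
      (by linear_combination (norm := module) hrefl + hy)
  set s := (2 * (1 - β))⁻¹
  have hs : 0 ≤ s := inv_nonneg.2 (by linarith [hβ.2])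
  have hsum : -PC c = s • (c - PC c) + s • (y - PD y) := by
    rw [hPDy, hy]
    have : 1 - β ≠ 0 := (sub_pos.2 hβ.2).ne'
    match_scalars <;> simp only [s] <;> field_simp <;> ring
  rw [hsum]
  refine Set.add_mem_add (smul_mem_normalCone (hPC.sub_mem_normalCone hC c) hs) ?_
  rw [← hPDy]
  exact smul_mem_normalCone (hPD.sub_mem_normalCone hD y) hs

lemma LipschitzWith.isAveraged_convexCombination {N : H → H} (hN : LipschitzWith 1 N) {α : ℝ}
    (hα : α ∈ Set.Ioo (0 : ℝ) 1) :
    IsAveraged ((1 - α) / α) (fun x => (1 - α) • x + α • N x) := by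
  intro x y
  have hNxy : ‖N x - N y‖ ≤ ‖x - y‖ := by
    simpa using lipschitzWith_iff_norm_sub_le.1 hN x y
  have h : ‖((1 - α) • x + α • N x) - ((1 - α) • y + α • N y)‖ ^ 2
      + (1 - α) / α * ‖(x - ((1 - α) • x + α • N x)) - (y - ((1 - α) • y + α • N y))‖ ^ 2
      = (1 - α) * ‖x - y‖ ^ 2 + α * ‖N x - N y‖ ^ 2 := by
    have hα0 := hα.1.ne'
    simp only [← real_inner_self_eq_norm_sq, inner_sub_left, inner_sub_right, inner_add_left,
      inner_add_right, real_inner_smul_right, real_inner_comm]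
    field_simp
    ring
  rw [h]
  nlinarith [hα.1, hα.2, pow_le_pow_left₀ (norm_nonneg _) hNxy 2]

lemma LipschitzWith.inner_displacement_sub_nonneg {T : H → H} (hT : LipschitzWith 1 T) (a b : H) :
    0 ≤ ⟪(a - T a) - (b - T b), a - b⟫ := by
  have hab : ‖T a - T b‖ ≤ ‖a - b‖ := by simpa using lipschitzWith_iff_norm_sub_le.1 hT a b
  have h : ⟪(a - T a) - (b - T b), a - b⟫ = ‖a - b‖ ^ 2 - ⟪T a - T b, a - b⟫ := by
    rw [← real_inner_self_eq_norm_sq, ← inner_sub_left]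
    congr 1
    abel
  nlinarith [real_inner_le_norm (T a - T b) (a - b), norm_nonneg (a - b)]

lemma LipschitzWith.exists_displacement_add_smul_eq [CompleteSpace H] {T : H → H}
    (hT : LipschitzWith 1 T) {ε : ℝ} (hε : 0 < ε) (u : H) : ∃ z, z - T z + ε • z = u := by
  let K : NNReal := ⟨(1 + ε)⁻¹, by positivity⟩
  have hK : ContractingWith K fun z => (1 + ε)⁻¹ • (T z + u) := by
    refine ⟨?_, lipschitzWith_iff_norm_sub_le.2 fun z w => ?_⟩
    · rw [← NNReal.coe_lt_coe]
      exact inv_lt_one_of_one_lt₀ (by linarith)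
    · rw [← smul_sub, add_sub_add_right_eq_sub, norm_smul, Real.norm_of_nonneg (by positivity)]
      exact mul_le_mul_of_nonneg_left (by simpa using lipschitzWith_iff_norm_sub_le.1 hT z w)
        (by positivity)
  obtain ⟨z, hz, -⟩ := hK.exists_fixedPoint 0 (edist_ne_top _ _)
  refine ⟨z, ?_⟩
  have hz : T z + u = (1 + ε) • z := (inv_smul_eq_iff₀ (by positivity)).1 hz
  linear_combination (norm := module) -hz

lemma LipschitzWith.minDisplacement_le_norm_midpoint [CompleteSpace H] {T : H → H}
    (hT : LipschitzWith 1 T) (a b : H) :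
    minDisplacement T ≤ ‖(2 : ℝ)⁻¹ • ((a - T a) + (b - T b))‖ := by
  set u := (2 : ℝ)⁻¹ • ((a - T a) + (b - T b))
  set w := u - (a - T a)
  have hDa : a - T a = u - w := by simp [w]
  have hDb : b - T b = u + w := by simp only [u, w]; module
  set ρ := minDisplacement T
  by_contra! hlt
  -- `z` below solves the resolvent equation `(I - T) z + ε z = u`; monotonicity of `I - T`
  -- forces `ε ‖z‖ = O(√ε)`, so `(I - T) z → u` as `ε → 0`.
  have hbound : ∀ ε > 0, (ρ - ‖u‖) ^ 2 ≤ ε * (‖w‖ * ‖b - a‖) + (ε * ‖a + b‖) ^ 2 := by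
    intro ε hε
    obtain ⟨z, hz⟩ := hT.exists_displacement_add_smul_eq hε u
    have hDz : z - T z = u - ε • z := eq_sub_of_add_eq hz
    have hρ : ρ ≤ ‖u‖ + ε * ‖z‖ := by
      refine (minDisplacement_le T z).trans ?_
      rw [hDz]
      exact (_root_.norm_sub_le _ _).trans_eq (by rw [norm_smul_of_nonneg hε.le])
    have hmono : 2 * ε * ‖z‖ ^ 2 ≤ ⟪w, b - a⟫ + ε * ⟪z, a + b⟫ := by
      have ha := hT.inner_displacement_sub_nonneg z a
      have hb := hT.inner_displacement_sub_nonneg z b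
      rw [hDz, hDa] at ha
      rw [hDz, hDb] at hb
      simp only [← real_inner_self_eq_norm_sq, inner_sub_left, inner_sub_right, inner_add_left,
        inner_add_right, real_inner_smul_right, real_inner_comm] at ha hb ⊢
      linarith
    have hCS₁ := real_inner_le_norm w (b - a)
    have hCS₂ := mul_le_mul_of_nonneg_left (real_inner_le_norm z (a + b)) hε.le
    have ht : ρ - ‖u‖ ≤ ε * ‖z‖ := by linarith
    nlinarith [mul_nonneg (norm_nonneg w) (norm_nonneg (b - a)), norm_nonneg z,
      norm_nonneg (a + b), sq_nonneg (ε * ‖z‖ - ε * ‖a + b‖)]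
  have hlim : Tendsto (fun ε : ℝ => ε * (‖w‖ * ‖b - a‖) + (ε * ‖a + b‖) ^ 2) (𝓝[>] 0) (𝓝 0) :=
    tendsto_nhdsWithin_of_tendsto_nhds ((by fun_prop : Continuous fun ε : ℝ =>
      ε * (‖w‖ * ‖b - a‖) + (ε * ‖a + b‖) ^ 2).tendsto' 0 0 (by simp))
  have := ge_of_tendsto hlim (eventually_nhdsWithin_of_forall hbound)
  nlinarith

lemma cauchySeq_of_tendsto_norm_of_le_norm_midpoint {d : ℕ → H} {ρ : ℝ}
    (hd : Tendsto (fun n => ‖d n‖) atTop (𝓝 ρ))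
    (hmid : ∀ n m, ρ ≤ ‖(2 : ℝ)⁻¹ • (d n + d m)‖) : CauchySeq d := by
  have hρ : 0 ≤ ρ := ge_of_tendsto' hd fun n => norm_nonneg _
  set g : ℕ × ℕ → ℝ := fun p => 2 * ‖d p.1‖ ^ 2 + 2 * ‖d p.2‖ ^ 2 - 4 * ρ ^ 2
  have hg : Tendsto g atTop (𝓝 0) := by
    rw [← prod_atTop_atTop_eq]
    have h1 : Tendsto (fun p : ℕ × ℕ => ‖d p.1‖) (atTop ×ˢ atTop) (𝓝 ρ) := hd.comp tendsto_fst
    have h2 : Tendsto (fun p : ℕ × ℕ => ‖d p.2‖) (atTop ×ˢ atTop) (𝓝 ρ) := hd.comp tendsto_snd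
    have := ((h1.pow 2).const_mul 2).add ((h2.pow 2).const_mul 2) |>.sub_const (4 * ρ ^ 2)
    convert this using 2
    ring
  rw [cauchySeq_iff_tendsto_dist_atTop_0]
  refine squeeze_zero (fun _ => dist_nonneg) (fun p => ?_) (by simpa using hg.sqrt)
  rw [← abs_of_nonneg dist_nonneg]
  refine Real.abs_le_sqrt ?_
  have hpar : ‖d p.1 - d p.2‖ ^ 2 = g p + 4 * (ρ ^ 2 - ‖(2 : ℝ)⁻¹ • (d p.1 + d p.2)‖ ^ 2) := by
    simp only [g, ← real_inner_self_eq_norm_sq, inner_sub_left, inner_sub_right, inner_add_right,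
      real_inner_smul_right, real_inner_comm]
    ring
  rw [dist_eq_norm, hpar]
  nlinarith [hmid p.1 p.2]

lemma Ultrafilter.exists_tendsto_inner [CompleteSpace H] {ι : Type*} (U : Ultrafilter ι)
    {y : ι → H} {M : ℝ} (hy : ∀ᶠ j in U, ‖y j‖ ≤ M) :
    ∃ m : H, ∀ z, Tendsto (fun j => ⟪y j, z⟫) U (𝓝 ⟪m, z⟫) := by
  have hlim : ∀ z, ∃ a, Tendsto (fun j => ⟪y j, z⟫) U (𝓝 a) := fun z =>
    U.exists_tendsto_of_eventually_abs_le (hy.mono fun j hj =>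
      (abs_real_inner_le_norm _ _).trans (mul_le_mul_of_nonneg_right hj (norm_nonneg z)))
  choose L hL using hlim
  let ℓ : H →ₗ[ℝ] ℝ :=
    { toFun := L
      map_add' := fun z w => tendsto_nhds_unique (hL (z + w)) (by
        simpa only [inner_add_right] using (hL z).add (hL w))
      map_smul' := fun c z => tendsto_nhds_unique (hL (c • z)) (by
        simpa only [real_inner_smul_right, RingHom.id_apply, smul_eq_mul] using
          (hL z).const_mul c) }
  have hℓ : ∀ z, ‖ℓ z‖ ≤ M * ‖z‖ := fun z =>
    le_of_tendsto (hL z).norm (hy.mono fun j hj =>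
      (norm_inner_le_norm _ _).trans (mul_le_mul_of_nonneg_right hj (norm_nonneg z)))
  refine ⟨(InnerProductSpace.toDual ℝ H).symm (ℓ.mkContinuous M hℓ), fun z => ?_⟩
  rw [InnerProductSpace.toDual_symm_apply]
  exact hL z

lemma LipschitzWith.exists_fixedPoint_of_tendsto_displacement [CompleteSpace H] {T : H → H}
    (hT : LipschitzWith 1 T) {ι : Type*} {l : Filter ι} [l.NeBot] {y : ι → H} {M : ℝ}
    (hy : ∀ᶠ j in l, ‖y j‖ ≤ M) (hd : Tendsto (fun j => y j - T (y j)) l (𝓝 0)) :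
    ∃ c, T c = c := by
  set U := Ultrafilter.of l
  have hUl : (U : Filter ι) ≤ l := Ultrafilter.of_le l
  obtain ⟨m, hm⟩ := U.exists_tendsto_inner (hUl hy)
  refine ⟨m, norm_sub_eq_zero_iff.1 <|
    pow_eq_zero_iff two_ne_zero |>.1 (le_antisymm ?_ (by positivity))⟩
  set e := fun j => ‖y j - T (y j)‖
  have he : Tendsto e U (𝓝 0) := by simpa using (hd.mono_left hUl).norm
  have hlim : Tendsto (fun j => ‖y j - T m‖ ^ 2 - ‖y j - m‖ ^ 2) U (𝓝 (‖T m - m‖ ^ 2)) := by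
    have h := ((hm (T m - m)).const_mul (-2)).const_add (‖T m‖ ^ 2 - ‖m‖ ^ 2)
    convert h using 1
    · ext j
      simp only [← real_inner_self_eq_norm_sq, inner_sub_left, inner_sub_right, real_inner_comm]
      ring
    · congr 1
      simp only [← real_inner_self_eq_norm_sq, inner_sub_left, inner_sub_right, real_inner_comm]
      ring
  have hbound : ∀ᶠ j in U, ‖y j - T m‖ ^ 2 - ‖y j - m‖ ^ 2 ≤ e j * (e j + 2 * (M + ‖m‖)) := by
    filter_upwards [hUl hy] with j hj
    have h1 : ‖y j - T m‖ ≤ e j + ‖y j - m‖ := by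
      have := lipschitzWith_iff_norm_sub_le.1 hT (y j) m
      rw [NNReal.coe_one, one_mul] at this
      calc ‖y j - T m‖ ≤ e j + ‖T (y j) - T m‖ := by
            simpa [e] using _root_.norm_sub_le_norm_sub_add_norm_sub (y j) (T (y j)) (T m)
        _ ≤ e j + ‖y j - m‖ := by linarith
    have h2 : ‖y j - m‖ ≤ M + ‖m‖ := (_root_.norm_sub_le _ _).trans (by linarith)
    have he0 : 0 ≤ e j := norm_nonneg _
    nlinarith [norm_nonneg (y j - m), norm_nonneg (y j - T m)]
  have hbound_lim : Tendsto (fun j => e j * (e j + 2 * (M + ‖m‖))) U (𝓝 0) := by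
    simpa using he.mul (he.add_const (2 * (M + ‖m‖)))
  exact le_of_tendsto_of_tendsto hlim hbound_lim hbound

theorem IsAveraged.tendsto_norm_atTop [CompleteSpace H] {k : ℝ} {T : H → H} (hT : IsAveraged k T)
    (hk : 0 < k) (hfix : ∀ c, T c ≠ c) {x : ℕ → H} (hx : ∀ n, x (n + 1) = T (x n)) :
    Tendsto (fun n => ‖x n‖) atTop atTop := by
  have hT₁ := hT.lipschitzWith_one hk.le
  obtain ⟨v, hv⟩ := cauchySeq_tendsto_of_complete <|
    cauchySeq_of_tendsto_norm_of_le_norm_midpoint (hT.tendsto_norm_displacement hk hx)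
      fun n m => hT₁.minDisplacement_le_norm_midpoint (x n) (x m)
  by_cases hv0 : v = 0
  · by_contra hdiv
    obtain ⟨M, hM⟩ : ∃ M, ∃ᶠ n in atTop, ‖x n‖ < M := by
      simpa only [tendsto_atTop, not_forall, not_eventually, not_le] using hdiv
    have := frequently_iff_neBot.1 hM
    obtain ⟨c, hc⟩ := hT₁.exists_fixedPoint_of_tendsto_displacement
      (l := atTop ⊓ 𝓟 {n | ‖x n‖ < M}) (M := M)
      (eventually_inf_principal.2 (Eventually.of_forall fun _ hn => le_of_lt hn))
      (hv0 ▸ hv.mono_left inf_le_left)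
    exact hfix c hc
  · refine tendsto_norm_atTop_of_tendsto_sub (neg_ne_zero.2 hv0) ?_
    simpa [hx] using hv.neg

end InnerProduct

theorem stmt_15_general {H : Type*} [NormedAddCommGroup H] [InnerProductSpace ℝ H] [CompleteSpace H]
    (A B : Set H) (hAv : Convex ℝ A)
    (hBv : Convex ℝ B)
    (α β : ℝ) (hα : α ∈ Set.Ioo (0 : ℝ) 1) (hβ : β ∈ Set.Ioo (0 : ℝ) 1)
    (q : H)
    (PAq PBq : H → H)
    (hPAq : ∀ x, PAq x ∈ A - {q} ∧ ∀ c ∈ A - {q}, ‖x - PAq x‖ ≤ ‖x - c‖)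
    (hPBq : ∀ x, PBq x ∈ B - {q} ∧ ∀ c ∈ B - {q}, ‖x - PBq x‖ ≤ ‖x - c‖)
    (hcase : A ∩ B = ∅ ∨
      ∃ p, (p ∈ A ∩ B ∧ ∀ y ∈ A ∩ B, ‖q - p‖ ≤ ‖q - y‖) ∧
        q - p ∉ normalCone A p + normalCone B p)
    (T : H → H)
    (hT : ∀ x, T x =
      (1 - α) • x + α • ((2 * β) • PBq ((2 * β) • PAq x - x) - ((2 * β) • PAq x - x)))
    (x : ℕ → H) (hrec : ∀ n, x (n + 1) = T (x n)) :
    Tendsto (fun n => ‖x n‖) atTop atTop := by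
  have hA : Convex ℝ (A - {q}) := hAv.sub (convex_singleton q)
  have hB : Convex ℝ (B - {q}) := hBv.sub (convex_singleton q)
  have hN : LipschitzWith 1 (relaxedReflection β PBq ∘ relaxedReflection β PAq) := by
    simpa using (IsNearestPointMap.lipschitzWith_relaxedReflection hPBq hB hβ.1.le hβ.2.le).comp
      (IsNearestPointMap.lipschitzWith_relaxedReflection hPAq hA hβ.1.le hβ.2.le)
  have hT' : T = fun x => (1 - α) • x + α • (relaxedReflection β PBq ∘ relaxedReflection β PAq) x :=
    funext hT
  refine (hT' ▸ hN.isAveraged_convexCombination hα).tendsto_norm_atTop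
    (div_pos (sub_pos.2 hα.2) hα.1) (fun c hc => ?_) hrec
  have hcone := neg_mem_normalCone_add_of_aamrOperator_eq_self hA hB hPAq hPBq hα.1.ne' hβ
    ((hT c).symm.trans hc)
  rw [normalCone_sub_singleton, normalCone_sub_singleton,
    show -PAq c = q - (PAq c + q) by abel] at hcone
  set p := PAq c + q
  have hp := normalCone_add_subset_normalCone_inter A B p hcone
  rcases hcase with hempty | ⟨p', ⟨hp'AB, hp'min⟩, hp'⟩
  · exact (hempty ▸ hp.1 : p ∈ (∅ : Set H))
  · exact hp' (eq_of_sub_mem_normalCone hp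
      (sub_mem_normalCone_of_forall_norm_le (hAv.inter hBv) hp'AB hp'min) ▸ hcone)

/-- If either `A ∩ B = ∅`, or `A ∩ B ≠ ∅` but the constraint
qualification `q − P_{A∩B}(q) ∈ N_A(P_{A∩B}(q)) + N_B(P_{A∩B}(q))` fails, then
the AAMR iterates satisfy `‖x_n‖ → ∞`. -/
theorem stmt_15 {H : Type*} [NormedAddCommGroup H] [InnerProductSpace ℝ H] [CompleteSpace H]
    (A B : Set H) (hAne : A.Nonempty) (hAc : IsClosed A) (hAv : Convex ℝ A)
    (hBne : B.Nonempty) (hBc : IsClosed B) (hBv : Convex ℝ B)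
    (α β : ℝ) (hα : α ∈ Set.Ioo (0 : ℝ) 1) (hβ : β ∈ Set.Ioo (0 : ℝ) 1)
    (q : H)
    (PAq PBq : H → H)
    (hPAq : ∀ x, PAq x ∈ A - {q} ∧ ∀ c ∈ A - {q}, ‖x - PAq x‖ ≤ ‖x - c‖)
    (hPBq : ∀ x, PBq x ∈ B - {q} ∧ ∀ c ∈ B - {q}, ‖x - PBq x‖ ≤ ‖x - c‖)
    (hcase : A ∩ B = ∅ ∨
      ∃ p, (p ∈ A ∩ B ∧ ∀ y ∈ A ∩ B, ‖q - p‖ ≤ ‖q - y‖) ∧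
        q - p ∉ normalCone A p + normalCone B p)
    (T : H → H)
    (hT : ∀ x, T x =
      (1 - α) • x + α • ((2 * β) • PBq ((2 * β) • PAq x - x) - ((2 * β) • PAq x - x)))
    (x : ℕ → H) (hrec : ∀ n, x (n + 1) = T (x n)) :
    Tendsto (fun n => ‖x n‖) atTop atTop :=
  stmt_15_general A B hAv hBv α β hα hβ q PAq PBq hPAq hPBq hcase T hT x hrec
end
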